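/- Let σ ∈ (1/2, 1) and let u : ℝ → ℂ be a Schwartz function, not identically zero, whose Fourier transform û is an even function. Then ∫_ℝ p₁(ξ)|û(ξ)|² dξ < ∫_ℝ |ξ|^{2σ}|û(ξ)|² dξ. (Equivalently, ‖𝒫₁^{1/2}u‖_{L²}² = c‖|∇|^σ u‖_{L²}² for some c ∈ (0,1) depending on u.) -/

import Mathlib

/-!
Since `|û|²` is even, the integral of `p₁ |û|²` equals that of the symmetrised symbol
`(p₁(ξ) + p₁(-ξ)) / 2 = (|ξ+1|^{2σ} + |ξ-1|^{2σ}) / 2 - 1`. Writing `|a|^{2σ} = (a²)^σ`, concavity of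
`t ↦ t^σ` bounds this by `(ξ² + 1)^σ - 1`, and strict subadditivity of `t ↦ t^σ` makes it
`< |ξ|^{2σ}` for `ξ ≠ 0`. As `|û|²` is continuous and not identically zero, the gap between the two
integrals is positive.
-/

open MeasureTheory Real FourierTransform

/-- The symbol `p₁(ξ) = |ξ+1|^{2σ} − 1 − 2σξ` of the operator `𝒫₁`. -/
noncomputable def pOne (σ : ℝ) (ξ : ℝ) : ℝ := |ξ + 1| ^ (2*σ) - 1 - 2*σ*ξ

namespace Real

theorem rpow_add_lt_add_rpow {p a b : ℝ} (ha : 0 < a) (hb : 0 < b) (hp : p < 1) :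
    (a + b) ^ p < a ^ p + b ^ p := by
  have hab : 0 < a + b := by linarith
  have key (c : ℝ) (hc : 0 < c) (hcab : c < a + b) : c * (a + b) ^ (p - 1) < c ^ p := by
    calc c * (a + b) ^ (p - 1) < c * c ^ (p - 1) :=
          mul_lt_mul_of_pos_left (rpow_lt_rpow_of_neg hc hcab (by linarith)) hc
      _ = c ^ p := by rw [rpow_sub_one hc.ne']; field_simp
  calc (a + b) ^ p = a * (a + b) ^ (p - 1) + b * (a + b) ^ (p - 1) := by
        rw [← add_mul, rpow_sub_one hab.ne', mul_div_cancel₀ _ hab.ne']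
    _ < a ^ p + b ^ p := add_lt_add (key a ha (by linarith)) (key b hb (by linarith))

theorem rpow_add_rpow_le_two_mul_rpow_half_add {p a b : ℝ} (ha : 0 ≤ a) (hb : 0 ≤ b)
    (hp₀ : 0 ≤ p) (hp₁ : p ≤ 1) : a ^ p + b ^ p ≤ 2 * ((a + b) / 2) ^ p := by
  have h := (concaveOn_rpow hp₀ hp₁).2 (Set.mem_Ici.2 ha) (Set.mem_Ici.2 hb)
    (by norm_num : (0 : ℝ) ≤ 1 / 2) (by norm_num : (0 : ℝ) ≤ 1 / 2) (by norm_num)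
  simp only [smul_eq_mul] at h
  rw [show 1 / 2 * a + 1 / 2 * b = (a + b) / 2 by ring] at h
  linarith

theorem rpow_le_one_add_sq {p x : ℝ} (hx : 0 ≤ x) (hp₀ : 0 ≤ p) (hp₂ : p ≤ 2) :
    x ^ p ≤ 1 + x ^ 2 := by
  rcases le_total x 1 with hx₁ | hx₁
  · linarith [rpow_le_one hx hx₁ hp₀, sq_nonneg x]
  · have h := rpow_le_rpow_of_exponent_le hx₁ hp₂
    rw [rpow_two] at h
    linarith

theorem abs_rpow_two_mul (a σ : ℝ) : |a| ^ (2 * σ) = (a ^ 2) ^ σ := by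
  rw [rpow_mul (abs_nonneg a), rpow_two, sq_abs]

end Real

theorem pOne_add_pOne_neg_lt {σ ξ : ℝ} (hσ₀ : 0 ≤ σ) (hσ₁ : σ < 1) (hξ : ξ ≠ 0) :
    pOne σ ξ + pOne σ (-ξ) < 2 * |ξ| ^ (2 * σ) := by
  have hconcave := Real.rpow_add_rpow_le_two_mul_rpow_half_add
    (sq_nonneg (ξ + 1)) (sq_nonneg (ξ - 1)) hσ₀ hσ₁.le
  have hsubadd := Real.rpow_add_lt_add_rpow (pow_pos (abs_pos.2 hξ) 2) one_pos hσ₁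
  rw [show ((ξ + 1) ^ 2 + (ξ - 1) ^ 2) / 2 = ξ ^ 2 + 1 by ring] at hconcave
  rw [sq_abs, Real.one_rpow] at hsubadd
  simp only [pOne, Real.abs_rpow_two_mul, show -ξ + 1 = -(ξ - 1) by ring, neg_sq]
  linarith

theorem abs_pOne_le {σ : ℝ} (hσ₀ : 0 ≤ σ) (hσ₁ : σ ≤ 1) (ξ : ℝ) :
    |pOne σ ξ| ≤ 5 * (1 + ξ ^ 2) := by
  have hpow := Real.rpow_le_one_add_sq (abs_nonneg (ξ + 1)) (by linarith : 0 ≤ 2 * σ)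
    (by linarith : 2 * σ ≤ 2)
  have hnonneg : 0 ≤ |ξ + 1| ^ (2 * σ) := Real.rpow_nonneg (abs_nonneg _) _
  rw [sq_abs] at hpow
  rw [abs_le, pOne]
  constructor <;> nlinarith [sq_nonneg (ξ + 1), sq_nonneg (ξ - 1)]

theorem abs_abs_rpow_two_mul_le {σ : ℝ} (hσ₀ : 0 ≤ σ) (hσ₁ : σ ≤ 1) (ξ : ℝ) :
    |(|ξ| ^ (2 * σ))| ≤ 1 * (1 + ξ ^ 2) := by
  rw [abs_of_nonneg (Real.rpow_nonneg (abs_nonneg ξ) _), one_mul, ← sq_abs ξ]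
  exact Real.rpow_le_one_add_sq (abs_nonneg ξ) (by linarith) (by linarith)

section SchwartzWeight

variable {D V : Type*} [NormedAddCommGroup D] [NormedSpace ℝ D] [MeasurableSpace D]
  [BorelSpace D] [SecondCountableTopology D] [NormedAddCommGroup V] [NormedSpace ℝ V]
  {μ : Measure D} [μ.HasTemperateGrowth]

theorem SchwartzMap.integrable_mul_norm_sq (v : SchwartzMap D V) {w : D → ℝ} {C : ℝ} {k : ℕ}
    (hw : AEStronglyMeasurable w μ) (hw_le : ∀ x, |w x| ≤ C * (1 + ‖x‖ ^ k)) :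
    Integrable (fun x => w x * ‖v x‖ ^ 2) μ := by
  have hwv : Integrable (fun x => w x * ‖v x‖) μ := by
    refine (((v.integrable_pow_mul μ 0).add (v.integrable_pow_mul μ k)).const_mul C).mono'
      (hw.mul v.continuous.norm.aestronglyMeasurable) (Filter.Eventually.of_forall fun x => ?_)
    rw [Real.norm_eq_abs, abs_mul, abs_norm]
    calc |w x| * ‖v x‖ ≤ C * (1 + ‖x‖ ^ k) * ‖v x‖ := by gcongr; exact hw_le x
      _ = C * (‖x‖ ^ 0 * ‖v x‖ + ‖x‖ ^ k * ‖v x‖) := by ring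
  have hbdd : ∀ᵐ x ∂μ, ‖‖v x‖‖ ≤ SchwartzMap.seminorm ℝ 0 0 v :=
    Filter.Eventually.of_forall fun x => (norm_norm (v x)).symm ▸ v.norm_le_seminorm ℝ x
  simpa only [sq, mul_assoc] using hwv.mul_bdd v.continuous.norm.aestronglyMeasurable hbdd

end SchwartzWeight

theorem integral_mul_lt_integral_mul_of_add_neg_lt {E : Type*} [NormedAddCommGroup E]
    [MeasurableSpace E] [BorelSpace E] {μ : Measure E} [μ.IsNegInvariant] [μ.IsOpenPosMeasure]
    [NullSingletonClass μ] {a b f : E → ℝ} (hf_even : ∀ x, f (-x) = f x) (hf_nonneg : 0 ≤ f)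
    (hf_cont : Continuous f) (hf_ne : f ≠ 0) (haf : Integrable (fun x => a x * f x) μ)
    (hbf : Integrable (fun x => b x * f x) μ) (hab : ∀ x ≠ 0, a x + a (-x) < 2 * b x) :
    ∫ x, a x * f x ∂μ < ∫ x, b x * f x ∂μ := by
  have haf_neg : Integrable (fun x => a (-x) * f x) μ := by
    simpa only [hf_even] using haf.comp_neg
  have hreflect : ∫ x, a (-x) * f x ∂μ = ∫ x, a x * f x ∂μ := by
    simpa only [hf_even] using integral_neg_eq_self (fun x => a x * f x) μ
  have hsum : Integrable (fun x => a x * f x + a (-x) * f x) μ := haf.add haf_neg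
  set d : E → ℝ := fun x => 2 * (b x * f x) - (a x * f x + a (-x) * f x) with hd
  have hd_int : Integrable d μ := (hbf.const_mul 2).sub hsum
  have hd_pos : ∀ x ≠ 0, f x ≠ 0 → 0 < d x := fun x hx hfx => by
    have := mul_lt_mul_of_pos_right (hab x hx) (lt_of_le_of_ne (hf_nonneg x) (Ne.symm hfx))
    simp only [hd]; linarith
  have hd_ae_nonneg : 0 ≤ᵐ[μ] d := by
    filter_upwards [compl_mem_ae_iff.2 (measure_singleton (0 : E))] with x hx
    rcases eq_or_ne (f x) 0 with hfx | hfx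
    · simp [hd, hfx]
    · exact (hd_pos x hx hfx).le
  have hsupport : 0 < μ (Function.support d) := calc
    0 < μ (Function.support f) :=
      hf_cont.isOpen_support.measure_pos μ (Function.support_nonempty_iff.2 hf_ne)
    _ = μ (Function.support f \ {0}) := (measure_sdiff_null (measure_singleton 0)).symm
    _ ≤ μ (Function.support d) :=
      measure_mono fun x ⟨hfx, hx⟩ => (hd_pos x hx hfx).ne'
  have hd_integral := (integral_pos_iff_support_of_nonneg_ae hd_ae_nonneg hd_int).2 hsupport
  rw [hd, integral_sub (hbf.const_mul 2) hsum, integral_add haf haf_neg,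
    integral_const_mul, hreflect] at hd_integral
  linarith

/-- For a nonzero Schwartz function `u` with even Fourier transform,
`‖𝒫₁^{1/2} u‖_{L²}² < ‖|∇|^σ u‖_{L²}²`, stated via the Fourier symbols. -/
theorem pOne_quadratic_form_lt (σ : ℝ) (hσ : σ ∈ Set.Ioo (1/2 : ℝ) 1)
    (u : SchwartzMap ℝ ℂ) (hu : u ≠ 0)
    (heven : ∀ ξ : ℝ, 𝓕 (⇑u) (-ξ) = 𝓕 (⇑u) ξ) :
    (∫ ξ : ℝ, pOne σ ξ * ‖𝓕 (⇑u) ξ‖ ^ (2 : ℕ)) <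
      ∫ ξ : ℝ, |ξ| ^ (2*σ) * ‖𝓕 (⇑u) ξ‖ ^ (2 : ℕ) := by
  obtain ⟨hσ₀, hσ₁⟩ : 0 ≤ σ ∧ σ < 1 := ⟨by linarith [hσ.1], hσ.2⟩
  rw [← SchwartzMap.fourier_coe]
  have hweight {w : ℝ → ℝ} {C : ℝ} (hw : Measurable w) (hw_le : ∀ ξ, |w ξ| ≤ C * (1 + ξ ^ 2)) :
      Integrable (fun ξ => w ξ * ‖𝓕 u ξ‖ ^ 2) :=
    (𝓕 u).integrable_mul_norm_sq (k := 2) hw.aestronglyMeasurable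
      fun ξ => by simpa only [Real.norm_eq_abs, sq_abs] using hw_le ξ
  refine integral_mul_lt_integral_mul_of_add_neg_lt
    (fun ξ => by rw [SchwartzMap.fourier_coe, heven]) (fun ξ => by positivity)
    ((𝓕 u).continuous.norm.pow 2) (fun h => hu ?_)
    (hweight (by unfold pOne; fun_prop) (abs_pOne_le hσ₀ hσ₁.le))
    (hweight (by fun_prop) (abs_abs_rpow_two_mul_le hσ₀ hσ₁.le))
    (fun ξ hξ => pOne_add_pOne_neg_lt hσ₀ hσ₁ hξ)
  have hFu : 𝓕 u = 0 := by
    ext ξ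
    simpa using congrFun h ξ
  rw [← fourierInv_fourier_eq (F := SchwartzMap ℝ ℂ) u, hFu, fourierInv_zero]
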